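/- arXiv:0907.3264 — 2 statements merged into one kernel-verified Lean document; each statement's English description precedes it below -/
import Mathlib

section
/- Let k be a non-Archimedean local field with |k^×| generated by q > 1, V a k-vector space with basis (e₀, …, e_d), and T̃ the corresponding diagonal torus of GL(V). Then every orbit of GL(V)(k) acting on the set of non-zero seminorms on V contains a T̃-diagonalizable seminorm x (one diagonalized by (e₀,…,e_d)) satisfying 0 ≤ |e_d|(x) ≤ ⋯ ≤ |e₁|(x) ≤ |e₀|(x) ≤ q. -/
/-!
Gram–Schmidt for an ultrametric seminorm `y` on `kᵈ⁺¹`. Suppose `y` is diagonalized by a family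
`b`, and let `u` be a further vector. A best approximation `∑ wᵢ bᵢ` of `u` exists: if
`inf_c y (u - ∑ cᵢ bᵢ) = 0`, the coefficients of an approximating sequence are Cauchy in every
coordinate with `y (bᵢ) ≠ 0` and converge because `k` is complete; otherwise, by the isosceles
property, every non-minimal value `y (u - ∑ cᵢ bᵢ)` is `|a| y (bᵢ)` for some `a ≠ 0`, hence lies
in the discrete set `⋃ᵢ q^ℤ y (bᵢ)`, which meets `[ε, T]` in a finite set, so the infimum is
attained. The residual `u - ∑ wᵢ bᵢ` is then `y`-orthogonal to `span b`, and appending it keeps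
`y` diagonal. Starting from the standard basis we get a basis diagonalizing `y`; rescaling its
vectors by small scalars and sorting them yields the required element of the orbit.
-/

open Finset Filter Topology
open scoped NNReal

theorem NNReal.finite_setOf_zpow_mul_mem_Icc {q : ℝ≥0} (hq : 1 < q) {ε : ℝ≥0} (hε : 0 < ε)
    (r T : ℝ≥0) : {m : ℤ | q ^ m * r ∈ Set.Icc ε T}.Finite := by
  rcases eq_or_ne r 0 with rfl | hr
  · convert Set.finite_empty
    ext m
    simpa using hε.ne'
  obtain ⟨M, hM⟩ := pow_unbounded_of_one_lt (T / r) hq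
  obtain ⟨M', hM'⟩ := pow_unbounded_of_one_lt (r / ε) hq
  rw [div_lt_iff₀ (pos_iff_ne_zero.mpr hr)] at hM
  rw [div_lt_iff₀ hε] at hM'
  refine (Set.finite_Ioo (-(M' : ℤ)) M).subset fun m ⟨hεm, hmT⟩ => ⟨?_, ?_⟩
  · have : q ^ (-m) * ε < q ^ (M' : ℤ) * ε :=
      calc q ^ (-m) * ε ≤ q ^ (-m) * (q ^ m * r) := by gcongr
        _ = r := by rw [← mul_assoc, ← zpow_add₀ (zero_lt_one.trans hq).ne', neg_add_cancel,
                      zpow_zero, one_mul]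
        _ < q ^ (M' : ℤ) * ε := by rwa [zpow_natCast]
    linarith [(zpow_lt_zpow_iff_right₀ hq).mp (lt_of_mul_lt_mul_right this zero_le)]
  · have : q ^ m * r < q ^ (M : ℤ) * r := by rw [zpow_natCast]; exact hmT.trans_lt hM
    exact (zpow_lt_zpow_iff_right₀ hq).mp (lt_of_mul_lt_mul_right this zero_le)

theorem NormedField.exists_ne_zero_nnnorm_mul_le (k : Type*) [NontriviallyNormedField k]
    (r : ℝ≥0) {t : ℝ≥0} (ht : 0 < t) : ∃ a : k, a ≠ 0 ∧ ‖a‖₊ * r ≤ t := by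
  obtain ⟨a, ha₀, ha⟩ := NormedField.exists_norm_lt k (r := ((t / (r + 1) : ℝ≥0) : ℝ))
    (by positivity)
  refine ⟨a, norm_pos_iff.mp ha₀, ?_⟩
  rw [← coe_nnnorm, NNReal.coe_lt_coe, lt_div_iff₀ (by positivity)] at ha
  calc ‖a‖₊ * r ≤ ‖a‖₊ * (r + 1) := by gcongr; exact le_self_add
    _ ≤ t := ha.le

theorem Tuple.exists_perm_antitone_comp {α : Type*} [LinearOrder α] {n : ℕ} (f : Fin n → α) :
    ∃ σ : Equiv.Perm (Fin n), Antitone (f ∘ σ) :=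
  ⟨Fin.revPerm.trans (Tuple.sort f), fun _ _ hij => Tuple.monotone_sort f (Fin.rev_le_rev.mpr hij)⟩

structure IsUltrametricSeminorm (k : Type*) {E : Type*} [NormedField k] [AddCommGroup E]
    [Module k E] (y : E → ℝ≥0) : Prop where
  map_smul : ∀ (a : k) (v : E), y (a • v) = ‖a‖₊ * y v
  map_add_le_max : ∀ v w : E, y (v + w) ≤ max (y v) (y w)

def IsDiagonalizedBy (k : Type*) {E ι : Type*} [NormedField k] [AddCommGroup E] [Module k E]
    [Fintype ι] (y : E → ℝ≥0) (b : ι → E) : Prop :=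
  ∀ c : ι → k, y (∑ i, c i • b i) = univ.sup fun i => ‖c i‖₊ * y (b i)

section

variable {k E : Type*} [NontriviallyNormedField k] [AddCommGroup E] [Module k E] {y : E → ℝ≥0}

namespace IsUltrametricSeminorm

variable (hy : IsUltrametricSeminorm k y)
include hy

theorem map_zero : y 0 = 0 := by
  simpa using hy.map_smul 0 0

theorem map_sub_le_max (v w : E) : y (v - w) ≤ max (y v) (y w) := by
  simpa only [sub_eq_add_neg, ← neg_one_smul k w, hy.map_smul, nnnorm_neg, nnnorm_one, one_mul]
    using hy.map_add_le_max v ((-1 : k) • w)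

theorem map_add_eq_max_of_le {x z : E} (h : y x ≤ y (x + z)) :
    y (x + z) = max (y x) (y z) := by
  refine le_antisymm (hy.map_add_le_max x z) (max_le h ?_)
  calc y z = y ((x + z) - x) := by rw [add_sub_cancel_left]
    _ ≤ max (y (x + z)) (y x) := hy.map_sub_le_max _ _
    _ = y (x + z) := max_eq_left h

theorem map_add_eq_right_of_lt {x z : E} (h : y x < y (x + z)) : y (x + z) = y z := by
  have h_eq := hy.map_add_eq_max_of_le h.le
  rw [h_eq] at h ⊢
  exact max_eq_right ((lt_max_iff.mp h).resolve_left (lt_irrefl _)).le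

end IsUltrametricSeminorm

namespace IsDiagonalizedBy

variable {ι : Type*} [Fintype ι] {b : ι → E}

theorem apply_sum_sub_sum (hb : IsDiagonalizedBy k y b) (c c' : ι → k) :
    y (∑ i, c i • b i - ∑ i, c' i • b i) = univ.sup fun i => ‖c i - c' i‖₊ * y (b i) := by
  simpa [sub_smul, Finset.sum_sub_distrib] using hb (c - c')

theorem comp_equiv {ι' : Type*} [Fintype ι'] (hb : IsDiagonalizedBy k y b) (σ : ι' ≃ ι) :
    IsDiagonalizedBy k y (b ∘ σ) := by
  intro c
  have hsup : ∀ g : ι → ℝ≥0, univ.sup g = univ.sup (g ∘ σ) := fun g => by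
    rw [← Finset.map_univ_equiv σ, Finset.sup_map]
    rfl
  have h := hb (c ∘ σ.symm)
  rw [← σ.sum_comp, hsup] at h
  simpa [Function.comp_def] using h

theorem smul (hy : IsUltrametricSeminorm k y) (hb : IsDiagonalizedBy k y b) (a : ι → k) :
    IsDiagonalizedBy k y fun i => a i • b i := by
  intro c
  simpa only [smul_smul, hy.map_smul, nnnorm_mul, mul_assoc] using hb fun i => c i * a i

theorem exists_apply_sum_sub_sum_le_of_cauchy [CompleteSpace k] (hb : IsDiagonalizedBy k y b)
    {s : ℕ → ι → k} {ε : ℕ → ℝ≥0} (hε : Tendsto ε atTop (𝓝 0))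
    (hs : ∀ n n', n ≤ n' → y (∑ i, s n i • b i - ∑ i, s n' i • b i) ≤ ε n) :
    ∃ l : ι → k, ∀ n, y (∑ i, s n i • b i - ∑ i, l i • b i) ≤ ε n := by
  have hcoord : ∀ i n n', n ≤ n' → ‖s n i - s n' i‖₊ * y (b i) ≤ ε n := fun i n n' hn => by
    refine le_trans ?_ (hs n n' hn)
    rw [hb.apply_sum_sub_sum]
    exact le_sup (f := fun i => ‖s n i - s n' i‖₊ * y (b i)) (mem_univ i)
  have hlim : ∀ i, ∃ l : k, y (b i) ≠ 0 → Tendsto (fun n => s n i) atTop (𝓝 l) := by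
    intro i
    by_cases hi : y (b i) = 0
    · exact ⟨0, fun h => (h hi).elim⟩
    refine (cauchySeq_tendsto_of_complete ?_).imp fun l hl _ => hl
    refine cauchySeq_of_le_tendsto_0' (fun n => ((ε n / y (b i) : ℝ≥0) : ℝ)) (fun n n' hn => ?_) ?_
    · rw [dist_eq_norm, ← coe_nnnorm, NNReal.coe_le_coe, le_div_iff₀ (pos_iff_ne_zero.mpr hi)]
      exact hcoord i n n' hn
    · simpa using NNReal.tendsto_coe.mpr (hε.div_const (y (b i)))
  choose l hl using hlim
  refine ⟨l, fun n => ?_⟩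
  rw [hb.apply_sum_sub_sum]
  refine Finset.sup_le fun i _ => ?_
  by_cases hi : y (b i) = 0
  · simp [hi]
  exact le_of_tendsto ((((hl i hi).const_sub (s n i)).nnnorm).mul_const (y (b i)))
    (eventually_atTop.mpr ⟨n, hcoord i n⟩)

theorem exists_apply_sub_sum_eq_zero [CompleteSpace k] (hy : IsUltrametricSeminorm k y)
    (hb : IsDiagonalizedBy k y b) (u : E)
    (h : ∀ ε > 0, ∃ c : ι → k, y (u - ∑ i, c i • b i) < ε) :
    ∃ l : ι → k, y (u - ∑ i, l i • b i) = 0 := by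
  set ε : ℕ → ℝ≥0 := fun n => 2⁻¹ ^ n
  have hε : Tendsto ε atTop (𝓝 0) :=
    NNReal.tendsto_pow_atTop_nhds_zero_of_lt_one (by norm_num)
  have hε_anti : Antitone ε := fun n n' hn => pow_le_pow_right_of_le_one' (by norm_num) hn
  choose s hs using fun n => h (ε n) (by positivity)
  obtain ⟨l, hl⟩ := hb.exists_apply_sum_sub_sum_le_of_cauchy hε fun n n' hn =>
    calc y (∑ i, s n i • b i - ∑ i, s n' i • b i)
        = y ((u - ∑ i, s n' i • b i) - (u - ∑ i, s n i • b i)) := by rw [sub_sub_sub_cancel_left]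
      _ ≤ ε n := (hy.map_sub_le_max _ _).trans
          (max_le ((hs n').le.trans (hε_anti hn)) (hs n).le)
  refine ⟨l, le_antisymm (ge_of_tendsto' hε fun n => ?_) zero_le⟩
  calc y (u - ∑ i, l i • b i)
      = y ((u - ∑ i, s n i • b i) + (∑ i, s n i • b i - ∑ i, l i • b i)) := by
        rw [sub_add_sub_cancel]
    _ ≤ ε n := (hy.map_add_le_max _ _).trans (max_le (hs n).le (hl n))

theorem exists_nnnorm_mul_eq_of_lt (hy : IsUltrametricSeminorm k y)
    (hb : IsDiagonalizedBy k y b) {u : E} {c c' : ι → k}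
    (h : y (u - ∑ i, c' i • b i) < y (u - ∑ i, c i • b i)) :
    ∃ i, ∃ a : k, a ≠ 0 ∧ y (u - ∑ i, c i • b i) = ‖a‖₊ * y (b i) := by
  have hsplit : u - ∑ i, c i • b i = (u - ∑ i, c' i • b i) + (∑ i, c' i • b i - ∑ i, c i • b i) :=
    (sub_add_sub_cancel _ _ _).symm
  rw [hsplit] at h ⊢
  have h_eq := hy.map_add_eq_right_of_lt h
  rw [h_eq, hb.apply_sum_sub_sum] at h ⊢
  obtain ⟨j, -, -⟩ := Finset.lt_sup_iff.mp h
  obtain ⟨i, -, hi⟩ := exists_mem_eq_sup univ ⟨j, mem_univ j⟩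
    fun i => ‖c' i - c i‖₊ * y (b i)
  refine ⟨i, c' i - c i, fun h0 => ?_, hi⟩
  simp [hi, h0] at h

theorem exists_forall_le_of_pos_lower_bound (hy : IsUltrametricSeminorm k y) {q : ℝ≥0}
    (hq : 1 < q) (hgen : ∀ a : k, a ≠ 0 → ∃ m : ℤ, ‖a‖₊ = q ^ m) (hb : IsDiagonalizedBy k y b)
    (u : E) {ε : ℝ≥0} (hε : 0 < ε) (hlb : ∀ c : ι → k, ε ≤ y (u - ∑ i, c i • b i)) :
    ∃ w : ι → k, ∀ c : ι → k, y (u - ∑ i, w i • b i) ≤ y (u - ∑ i, c i • b i) := by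
  by_contra! hcon
  set f : (ι → k) → ℝ≥0 := fun c => y (u - ∑ i, c i • b i)
  -- With no minimum, every value of `f` lies in `⋃ i, q ^ ℤ * y (b i)`.
  let T : Set ℝ≥0 := Set.range f ∩ Set.Iic (f 0)
  have hT : T.Finite := by
    refine (Set.finite_iUnion fun i => (NNReal.finite_setOf_zpow_mul_mem_Icc hq hε (y (b i))
      (f 0)).image fun m => q ^ m * y (b i)).subset ?_
    rintro _ ⟨⟨c, rfl⟩, hc⟩
    obtain ⟨c', hc'⟩ := hcon c
    obtain ⟨i, a, ha, hi⟩ := hb.exists_nnnorm_mul_eq_of_lt hy hc'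
    obtain ⟨m, hm⟩ := hgen a ha
    rw [hm] at hi
    exact Set.mem_iUnion.mpr ⟨i, m, show _ ∈ Set.Icc _ _ from hi ▸ ⟨hlb c, hc⟩, hi.symm⟩
  obtain ⟨_, ⟨⟨c, rfl⟩, hc⟩, hmin⟩ := Set.exists_min_image T id hT ⟨f 0, ⟨0, rfl⟩, le_refl (f 0)⟩
  obtain ⟨c', hc'⟩ := hcon c
  exact (hmin (f c') ⟨⟨c', rfl⟩, hc'.le.trans hc⟩).not_gt hc'

theorem exists_forall_le [CompleteSpace k] (hy : IsUltrametricSeminorm k y) {q : ℝ≥0}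
    (hq : 1 < q) (hgen : ∀ a : k, a ≠ 0 → ∃ m : ℤ, ‖a‖₊ = q ^ m) (hb : IsDiagonalizedBy k y b)
    (u : E) : ∃ w : ι → k, ∀ c : ι → k, y (u - ∑ i, w i • b i) ≤ y (u - ∑ i, c i • b i) := by
  by_cases h : ∀ ε > 0, ∃ c : ι → k, y (u - ∑ i, c i • b i) < ε
  · obtain ⟨l, hl⟩ := hb.exists_apply_sub_sum_eq_zero hy u h
    exact ⟨l, fun c => hl ▸ zero_le⟩
  · push Not at h
    obtain ⟨ε, hε, hlb⟩ := h
    exact hb.exists_forall_le_of_pos_lower_bound hy hq hgen u hε hlb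

theorem snoc (hy : IsUltrametricSeminorm k y) {m : ℕ} {b : Fin m → E}
    (hb : IsDiagonalizedBy k y b) {v : E} (hv : ∀ c : Fin m → k, y v ≤ y (v + ∑ i, c i • b i)) :
    IsDiagonalizedBy k y (Fin.snoc b v : Fin (m + 1) → E) := by
  intro c
  rw [Fin.sum_univ_castSucc, Fin.univ_castSuccEmb, sup_cons, sup_map]
  simp only [Fin.snoc_castSucc, Fin.snoc_last, Function.comp_def, Fin.coe_castSuccEmb]
  rw [← hb, add_comm, hy.map_add_eq_max_of_le, hy.map_smul]
  set a := c (Fin.last m)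
  rcases eq_or_ne a 0 with ha | ha
  · simp [ha, hy.map_zero]
  calc y (a • v) = ‖a‖₊ * y v := hy.map_smul a v
    _ ≤ ‖a‖₊ * y (v + ∑ i, (a⁻¹ * c i.castSucc) • b i) := by gcongr; exact hv _
    _ = y (a • v + ∑ i, c i.castSucc • b i) := by
      rw [← hy.map_smul, smul_add, Finset.smul_sum]
      simp only [smul_smul, mul_inv_cancel_left₀ ha]

end IsDiagonalizedBy

namespace IsUltrametricSeminorm

variable [CompleteSpace k] (hy : IsUltrametricSeminorm k y) {q : ℝ≥0} (hq : 1 < q)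
  (hgen : ∀ a : k, a ≠ 0 → ∃ m : ℤ, ‖a‖₊ = q ^ m)
include hy hq hgen

theorem exists_isDiagonalizedBy_of_linearIndependent {m : ℕ} (v : Fin m → E)
    (hv : LinearIndependent k v) :
    ∃ b : Fin m → E, LinearIndependent k b ∧
      Submodule.span k (Set.range b) ≤ Submodule.span k (Set.range v) ∧
      IsDiagonalizedBy k y b := by
  induction m with
  | zero => exact ⟨v, hv, le_rfl, fun c => by simp [hy.map_zero]⟩
  | succ m ih =>
    obtain ⟨hv_init, hv_last⟩ := linearIndependent_finSucc'.mp hv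
    obtain ⟨b, hb_li, hb_span, hb⟩ := ih (Fin.init v) hv_init
    obtain ⟨w, hw⟩ := hb.exists_forall_le hy hq hgen (v (Fin.last m))
    have hw_mem : ∑ i, w i • b i ∈ Submodule.span k (Set.range b) :=
      Submodule.sum_mem _ fun i _ => Submodule.smul_mem _ _ (Submodule.subset_span ⟨i, rfl⟩)
    have hinit : Submodule.span k (Set.range (Fin.init v)) ≤ Submodule.span k (Set.range v) :=
      Submodule.span_mono (Set.range_comp_subset_range _ _)
    refine ⟨Fin.snoc b (v (Fin.last m) - ∑ i, w i • b i), ?_, ?_, hb.snoc hy fun c => ?_⟩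
    · refine linearIndependent_finSnoc.mpr ⟨hb_li, fun h => hv_last (hb_span ?_)⟩
      simpa using Submodule.add_mem _ h hw_mem
    · rw [Submodule.span_le, Fin.range_snoc, Set.insert_subset_iff]
      exact ⟨Submodule.sub_mem _ (Submodule.subset_span ⟨_, rfl⟩) (hinit (hb_span hw_mem)),
        Submodule.subset_span.trans (hb_span.trans hinit)⟩
    · convert hw (w - c) using 2
      simp only [Pi.sub_apply, sub_smul, Finset.sum_sub_distrib]
      abel

theorem exists_basis_isDiagonalizedBy {n : ℕ} (v : Module.Basis (Fin n) k E) :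
    ∃ b : Module.Basis (Fin n) k E, IsDiagonalizedBy k y b := by
  have := Module.Finite.of_basis v
  obtain ⟨b, hb_li, -, hb⟩ :=
    hy.exists_isDiagonalizedBy_of_linearIndependent hq hgen v v.linearIndependent
  have hcard : Fintype.card (Fin n) = Module.finrank k E := (Module.finrank_eq_card_basis v).symm
  refine ⟨basisOfLinearIndependentOfCardEqFinrank' b hb_li hcard, ?_⟩
  rwa [coe_basisOfLinearIndependentOfCardEqFinrank']

end IsUltrametricSeminorm

end

theorem orbit_contains_dominant_diagonal_seminorm_general
    {k : Type*} [NontriviallyNormedField k] [CompleteSpace k]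
    (q : NNReal) (hq : 1 < q)
    (hgen : ∀ a : k, a ≠ 0 → ∃ m : ℤ, ‖a‖₊ = q ^ m)
    (d : ℕ)
    (y : (Fin (d + 1) → k) → NNReal)
    (hsmul : ∀ (a : k) (v : Fin (d + 1) → k), y (a • v) = ‖a‖₊ * y v)
    (hmax : ∀ v w : Fin (d + 1) → k, y (v + w) ≤ max (y v) (y w)) :
    ∃ g : (Fin (d + 1) → k) ≃ₗ[k] (Fin (d + 1) → k),
      (∀ c : Fin (d + 1) → k,
        y (g c) = Finset.univ.sup (fun i => ‖c i‖₊ * y (g (Pi.single i 1)))) ∧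
      (∀ i j : Fin (d + 1), i ≤ j → y (g (Pi.single j 1)) ≤ y (g (Pi.single i 1))) ∧
      y (g (Pi.single 0 1)) ≤ q := by
  have hy : IsUltrametricSeminorm k y := ⟨hsmul, hmax⟩
  obtain ⟨B, hB⟩ := hy.exists_basis_isDiagonalizedBy hq hgen (Pi.basisFun k (Fin (d + 1)))
  choose a ha₀ ha using fun i =>
    NormedField.exists_ne_zero_nnnorm_mul_le k (y (B i)) (zero_lt_one.trans hq)
  obtain ⟨σ, hσ⟩ := Tuple.exists_perm_antitone_comp fun i => y (a i • B i)
  let C := (B.unitsSMul fun i => Units.mk0 (a i) (ha₀ i)).reindex σ.symm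
  have hC : ⇑C = (fun i => a i • B i) ∘ σ := by ext1 i; simp [C, Module.Basis.unitsSMul_apply]
  have hC_diag : IsDiagonalizedBy k y C := hC ▸ (hB.smul hy a).comp_equiv σ
  refine ⟨C.equivFun.symm, fun c => ?_, fun i j hij => ?_, ?_⟩ <;>
    simp only [Basis.equivFun_symm_single]
  · rw [Module.Basis.equivFun_symm_apply]
    exact hC_diag c
  · rw [hC]
    exact hσ hij
  · rw [hC, Function.comp_apply, hsmul]
    exact ha _

/-- over a non-Archimedean local field `k` with value group generated by `q > 1`,
every `GL(V)(k)`-orbit of non-zero seminorms on `V = k^{d+1}` contains a seminorm `x`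
diagonalized by the standard basis `(e₀,…,e_d)` with
`0 ≤ |e_d|(x) ≤ ⋯ ≤ |e₁|(x) ≤ |e₀|(x) ≤ q`. -/
theorem orbit_contains_dominant_diagonal_seminorm
    {k : Type*} [NontriviallyNormedField k] [CompleteSpace k]
    (hna : ∀ a b : k, ‖a + b‖ ≤ max ‖a‖ ‖b‖)
    (q : NNReal) (hq : 1 < q)
    (hgen : ∀ a : k, a ≠ 0 → ∃ m : ℤ, ‖a‖₊ = q ^ m)
    (d : ℕ)
    (y : (Fin (d + 1) → k) → NNReal)
    (hsmul : ∀ (a : k) (v : Fin (d + 1) → k), y (a • v) = ‖a‖₊ * y v)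
    (hmax : ∀ v w : Fin (d + 1) → k, y (v + w) ≤ max (y v) (y w))
    (hy : ∃ v, y v ≠ 0) :
    ∃ g : (Fin (d + 1) → k) ≃ₗ[k] (Fin (d + 1) → k),
      (∀ c : Fin (d + 1) → k,
        y (g c) = Finset.univ.sup (fun i => ‖c i‖₊ * y (g (Pi.single i 1)))) ∧
      (∀ i j : Fin (d + 1), i ≤ j → y (g (Pi.single j 1)) ≤ y (g (Pi.single i 1))) ∧
      y (g (Pi.single 0 1)) ≤ q :=
  orbit_contains_dominant_diagonal_seminorm_general q hq hgen d y hsmul hmax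
end

section
/- In the setting of the previous statement, the set C̄ of non-zero seminorms x on V = k^{d+1} diagonalized by the standard basis and satisfying 0 ≤ |e_d|(x) ≤ ⋯ ≤ |e₁|(x) ≤ |e₀|(x) is a fundamental domain for the action of K(o) = GL(d+1, k°) on non-zero seminorms: every K(o)-orbit meets C̄, and if x ∈ C̄, g ∈ K(o), and g·x ∈ C̄, then g·x = x. -/
/-- A (non-Archimedean) seminorm on `V = k^{d+1}`. -/
def IsVecSeminorm {k : Type*} [NormedField k] (d : ℕ)
    (x : (Fin (d + 1) → k) → NNReal) : Prop :=
  (∀ (a : k) (v : Fin (d + 1) → k), x (a • v) = ‖a‖₊ * x v) ∧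
  (∀ v w : Fin (d + 1) → k, x (v + w) ≤ max (x v) (x w))

/-- `x` belongs to the set `C̄`: it is a non-zero seminorm diagonalized by the standard basis
with `0 ≤ |e_d|(x) ≤ ⋯ ≤ |e₁|(x) ≤ |e₀|(x)`. -/
def InCbar {k : Type*} [NormedField k] (d : ℕ)
    (x : (Fin (d + 1) → k) → NNReal) : Prop :=
  (∃ v, x v ≠ 0) ∧
  (∀ c : Fin (d + 1) → k,
    x c = Finset.univ.sup (fun i => ‖c i‖₊ * x (Pi.single i 1))) ∧
  (∀ i j : Fin (d + 1), i ≤ j → x (Pi.single j 1) ≤ x (Pi.single i 1))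

/-- `g` belongs to `K(o) = GL(d+1, k°)`: both `g` and `g⁻¹` have entries in the valuation
ring `k°`. -/
def InKo {k : Type*} [NormedField k] (d : ℕ)
    (g : Matrix.GeneralLinearGroup (Fin (d + 1)) k) : Prop :=
  (∀ i j, ‖(↑g : Matrix (Fin (d + 1)) (Fin (d + 1)) k) i j‖ ≤ 1) ∧
  (∀ i j, ‖(↑g⁻¹ : Matrix (Fin (d + 1)) (Fin (d + 1)) k) i j‖ ≤ 1)

/-- The action of `GL(d+1,k)` on seminorms: `(g·x)(v) = x(g⁻¹ v)`. -/
def glAct {k : Type*} [NormedField k] (d : ℕ)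
    (g : Matrix.GeneralLinearGroup (Fin (d + 1)) k)
    (x : (Fin (d + 1) → k) → NNReal) : (Fin (d + 1) → k) → NNReal :=
  fun v => x ((↑g⁻¹ : Matrix (Fin (d + 1)) (Fin (d + 1)) k).mulVec v)

/-!
Existence is the Goldman–Iwahori construction of an orthogonal basis, by induction on the
dimension. After permuting coordinates, `e₀` is the longest standard basis vector, hence the
longest integral vector. By induction, the seminorm induced on `k^{d+1} ⧸ k e₀` is diagonalized by
some `g ∈ K(o)`. Each column of `g` lifts to a vector realising its quotient seminorm: the infimum
over a line is attained because the value group is discrete and `k` is complete, and the lift can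
be taken integral because `e₀` is longest. Such lifts are orthogonal to `e₀`, so the bordered
matrix `[[1, t], [0, g]]` lies in `K(o)` and diagonalizes the seminorm; sorting its columns then
orders the weights.

For uniqueness, an element of `K(o)` has a unit determinant, so by the ultrametric inequality some
permutation `σ` picks out entries `g (σ i) i` of norm one. For diagonal `x` this gives
`x(e_{σ i}) ≤ (g·x)(e_i)`, and symmetrically for `g⁻¹`; since both weight sequences are
decreasing, a pigeonhole argument turns these inequalities into equalities.
-/

open Finset Matrix Filter Topology
open scoped NNReal

section UltraSeminorm

variable (k : Type*) [NormedField k] {V : Type*} [AddCommGroup V] [Module k V]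

structure IsUltraSeminorm (x : V → ℝ≥0) : Prop where
  map_smul : ∀ (a : k) (v : V), x (a • v) = ‖a‖₊ * x v
  map_add_le_max : ∀ v w : V, x (v + w) ≤ max (x v) (x w)

variable {k} {x : V → ℝ≥0}

namespace IsUltraSeminorm

theorem map_zero (hx : IsUltraSeminorm k x) : x 0 = 0 := by
  simpa using hx.map_smul 0 0

theorem map_neg (hx : IsUltraSeminorm k x) (v : V) : x (-v) = x v := by
  simpa using hx.map_smul (-1) v

theorem map_sub_le_max (hx : IsUltraSeminorm k x) (v w : V) : x (v - w) ≤ max (x v) (x w) := by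
  simpa [sub_eq_add_neg, hx.map_neg] using hx.map_add_le_max v (-w)

theorem map_add_eq_left (hx : IsUltraSeminorm k x) {v w : V} (h : x w < x v) :
    x (v + w) = x v := by
  refine le_antisymm ((hx.map_add_le_max v w).trans (max_le le_rfl h.le)) ?_
  have := hx.map_sub_le_max (v + w) w
  rw [add_sub_cancel_right] at this
  exact (le_max_iff.mp this).resolve_right h.not_ge

theorem map_sum_le (hx : IsUltraSeminorm k x) {ι : Type*} (s : Finset ι) (f : ι → V) :
    x (∑ i ∈ s, f i) ≤ s.sup fun i => x (f i) :=
  Finset.sum_induction f (fun v => x v ≤ s.sup fun i => x (f i))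
    (fun _ _ hv hw => (hx.map_add_le_max _ _).trans (max_le hv hw))
    (by simp [hx.map_zero]) fun i hi => le_sup (f := fun i => x (f i)) hi

theorem comp_linearMap (hx : IsUltraSeminorm k x) {W : Type*} [AddCommGroup W] [Module k W]
    (f : W →ₗ[k] V) : IsUltraSeminorm k (x ∘ f) where
  map_smul a v := by simp [hx.map_smul]
  map_add_le_max v w := by simpa using hx.map_add_le_max (f v) (f w)

theorem map_le_sup_single {n : Type*} [Fintype n] [DecidableEq n] {x : (n → k) → ℝ≥0}
    (hx : IsUltraSeminorm k x) (c : n → k) :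
    x c ≤ univ.sup fun i => ‖c i‖₊ * x (Pi.single i 1) := by
  conv_lhs => rw [← Finset.univ_sum_single c]
  refine (hx.map_sum_le _ _).trans (sup_mono_fun fun i _ => ?_)
  rw [← hx.map_smul, ← Pi.single_smul, smul_eq_mul, mul_one]

end IsUltraSeminorm

end UltraSeminorm

section LineQuotient

variable {k : Type*} [NormedField k] {V : Type*} [AddCommGroup V] [Module k V] {x : V → ℝ≥0}

variable (k) in
/-- The seminorm induced by `x` on the quotient `V ⧸ k ∙ e`. -/
noncomputable def quotNorm (x : V → ℝ≥0) (e v : V) : ℝ≥0 :=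
  ⨅ t : k, x (v + t • e)

theorem quotNorm_le {e v : V} (t : k) : quotNorm k x e v ≤ x (v + t • e) :=
  ciInf_le (OrderBot.bddBelow _) t

namespace IsUltraSeminorm

theorem quotient (hx : IsUltraSeminorm k x) (e : V) : IsUltraSeminorm k (quotNorm k x e) where
  map_smul a v := by
    rcases eq_or_ne a 0 with rfl | ha
    · simpa [hx.map_zero] using quotNorm_le (x := x) (e := e) (v := 0) (0 : k)
    calc _ = ⨅ t : k, x (a • v + (a * t) • e) :=
          ((Equiv.mulLeft₀ a ha).iInf_comp (g := fun t => x (a • v + t • e))).symm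
      _ = ⨅ t : k, ‖a‖₊ * x (v + t • e) := by simp_rw [mul_smul, ← smul_add, hx.map_smul]
      _ = _ := (NNReal.mul_iInf _ _).symm
  map_add_le_max v w := by
    by_contra! h
    obtain ⟨t, ht⟩ := exists_lt_of_ciInf_lt ((le_max_left _ _).trans_lt h)
    obtain ⟨s, hs⟩ := exists_lt_of_ciInf_lt ((le_max_right _ _).trans_lt h)
    have hle := hx.map_add_le_max (v + t • e) (w + s • e)
    rw [show v + t • e + (w + s • e) = v + w + (t + s) • e by module] at hle
    replace hle := (quotNorm_le (t + s)).trans hle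
    exact (hle.trans_lt (max_lt ht hs)).false

theorem nnnorm_sub_mul_le (hx : IsUltraSeminorm k x) (e v : V) (s t : k) :
    ‖s - t‖₊ * x e ≤ max (x (v + s • e)) (x (v + t • e)) := by
  rw [← hx.map_smul, show (s - t) • e = v + s • e - (v + t • e) by module]
  exact hx.map_sub_le_max _ _

theorem map_add_smul_le (hx : IsUltraSeminorm k x) (e v : V) (s t : k) :
    x (v + s • e) ≤ max (x (v + t • e)) (‖s - t‖₊ * x e) := by
  rw [← hx.map_smul, show v + s • e = v + t • e + (s - t) • e by module]
  exact hx.map_add_le_max _ _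

theorem exists_eq_quotNorm_of_pos (hx : IsUltraSeminorm k x) {q : ℝ≥0} (hq : 1 < q)
    (hgap : ∀ a b : k, ‖b‖₊ < ‖a‖₊ → q * ‖b‖₊ ≤ ‖a‖₊) {e v : V}
    (hpos : 0 < quotNorm k x e v) : ∃ t : k, x (v + t • e) = quotNorm k x e v := by
  by_contra! hne
  have hgt : ∀ t : k, quotNorm k x e v < x (v + t • e) :=
    fun t => (quotNorm_le t).lt_of_ne (hne t).symm
  -- a value above the infimum is `‖u‖ * x e`, so two such values differ by a factor `≥ q`
  have hstep : ∀ t : k, ∃ s : k, x (v + s • e) < x (v + t • e) ∧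
      x (v + t • e) = ‖t - s‖₊ * x e := by
    intro t
    obtain ⟨s, hs⟩ := exists_lt_of_ciInf_lt (hgt t)
    refine ⟨s, hs, le_antisymm ?_ ((hx.nnnorm_sub_mul_le e v t s).trans (max_le le_rfl hs.le))⟩
    exact (le_max_iff.mp (hx.map_add_smul_le e v t s)).resolve_left hs.not_ge
  obtain ⟨t₁, ht₁⟩ := exists_lt_of_ciInf_lt (lt_mul_of_one_lt_left hpos hq)
  obtain ⟨t₂, h₂₁, h₁⟩ := hstep t₁
  obtain ⟨t₃, -, h₂⟩ := hstep t₂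
  have hgap' : q * x (v + t₂ • e) ≤ x (v + t₁ • e) := by
    rw [h₁, h₂, ← mul_assoc]
    refine mul_le_mul_left (hgap _ _ ?_) _
    rw [h₁, h₂] at h₂₁
    exact lt_of_mul_lt_mul_right h₂₁ zero_le
  have := (mul_lt_mul_of_pos_left (hgt t₂) (zero_lt_one.trans hq)).trans_le hgap'
  exact (this.trans ht₁).false

theorem exists_eq_zero_of_quotNorm_eq_zero [CompleteSpace k] (hx : IsUltraSeminorm k x)
    {e v : V} (he : x e ≠ 0) (h0 : quotNorm k x e v = 0) : ∃ t : k, x (v + t • e) = 0 := by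
  have hseq : ∀ m : ℕ, ∃ t : k, x (v + t • e) < x e * 2⁻¹ ^ m := fun m =>
    exists_lt_of_ciInf_lt (show quotNorm k x e v < _ by rw [h0]; positivity)
  choose t ht using hseq
  have hcauchy : CauchySeq t := by
    refine cauchySeq_of_le_geometric 2⁻¹ 1 (by norm_num) fun m => ?_
    have hmono : x e * 2⁻¹ ^ (m + 1) ≤ x e * 2⁻¹ ^ m :=
      mul_le_mul_of_nonneg_left (pow_le_pow_of_le_one zero_le (by norm_num) m.le_succ) zero_le
    have hlt := (hx.nnnorm_sub_mul_le e v (t m) (t (m + 1))).trans_lt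
      (max_lt (ht m) ((ht (m + 1)).trans_le hmono))
    rw [mul_comm] at hlt
    have := (lt_of_mul_lt_mul_left hlt zero_le).le
    rw [dist_eq_norm, one_mul, ← coe_nnnorm]
    exact_mod_cast this
  obtain ⟨T, hT⟩ := cauchySeq_tendsto_of_complete hcauchy
  have hvals : Tendsto (fun m => x (v + t m • e)) atTop (𝓝 0) :=
    tendsto_of_tendsto_of_tendsto_of_le_of_le tendsto_const_nhds (by
      simpa using (NNReal.tendsto_pow_atTop_nhds_zero_of_lt_one (r := 2⁻¹)
        (by norm_num)).const_mul (x e)) (fun _ => zero_le) fun m => (ht m).le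
  have hsteps : Tendsto (fun m => ‖T - t m‖₊ * x e) atTop (𝓝 0) := by
    simpa using (hT.const_sub T).nnnorm.mul_const (x e)
  exact ⟨T, le_antisymm (ge_of_tendsto' (by simpa using hvals.max hsteps)
    fun m => hx.map_add_smul_le e v T (t m)) zero_le⟩

theorem exists_eq_quotNorm [CompleteSpace k] (hx : IsUltraSeminorm k x) {q : ℝ≥0} (hq : 1 < q)
    (hgap : ∀ a b : k, ‖b‖₊ < ‖a‖₊ → q * ‖b‖₊ ≤ ‖a‖₊) (e v : V) :
    ∃ t : k, x (v + t • e) = quotNorm k x e v := by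
  rcases eq_or_ne (x e) 0 with he | he
  · refine ⟨0, le_antisymm (le_ciInf fun t => ?_) (quotNorm_le 0)⟩
    simpa [he] using hx.map_add_smul_le e v 0 t
  rcases eq_or_ne (quotNorm k x e v) 0 with h0 | h0
  · simpa [h0] using hx.exists_eq_zero_of_quotNorm_eq_zero he h0
  · exact hx.exists_eq_quotNorm_of_pos hq hgap (pos_iff_ne_zero.mpr h0)

theorem exists_norm_le_one_eq_quotNorm [CompleteSpace k] (hx : IsUltraSeminorm k x) {q : ℝ≥0}
    (hq : 1 < q) (hgap : ∀ a b : k, ‖b‖₊ < ‖a‖₊ → q * ‖b‖₊ ≤ ‖a‖₊) {e v : V} (hv : x v ≤ x e) :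
    ∃ t : k, ‖t‖ ≤ 1 ∧ x (v + t • e) = quotNorm k x e v := by
  obtain ⟨t₀, ht₀⟩ := hx.exists_eq_quotNorm hq hgap e v
  by_cases h1 : ‖t₀‖ ≤ 1
  · exact ⟨t₀, h1, ht₀⟩
  refine ⟨0, by simp, le_antisymm ?_ (quotNorm_le 0)⟩
  have hle := hx.map_add_smul_le e v 0 t₀
  simp only [zero_smul, add_zero, zero_sub, nnnorm_neg] at hle ⊢
  rcases le_or_gt (‖t₀‖₊ * x e) (x (v + t₀ • e)) with hs | hs
  · rwa [max_eq_left hs, ht₀] at hle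
  -- otherwise `v = (v + t₀ • e) - t₀ • e` would be longer than `e`
  exfalso
  have hv' : x v = ‖t₀‖₊ * x e := by
    have := hx.map_add_eq_left (v := (-t₀) • e) (w := v + t₀ • e)
      (by rwa [hx.map_smul, nnnorm_neg])
    rwa [show (-t₀) • e + (v + t₀ • e) = v by module, hx.map_smul, nnnorm_neg] at this
  have hpos : 0 < x e := pos_iff_ne_zero.mpr fun he => by simp [he] at hs
  have ht₀' : 1 < ‖t₀‖₊ := by rw [← NNReal.coe_lt_coe, coe_nnnorm]; simpa using h1
  exact (hv.trans_lt ((lt_mul_of_one_lt_left hpos ht₀').trans_eq hv'.symm)).false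

theorem map_smul_add_eq_max (hx : IsUltraSeminorm k x) {e w : V} (hw : x w ≤ quotNorm k x e w)
    (a : k) : x (a • e + w) = max (‖a‖₊ * x e) (x w) := by
  rcases lt_or_ge (x w) (‖a‖₊ * x e) with h | h
  · rw [max_eq_left h.le, hx.map_add_eq_left (by rwa [hx.map_smul]), hx.map_smul]
  · rw [max_eq_right h]
    refine le_antisymm ((hx.map_add_le_max _ _).trans (max_le (by rwa [hx.map_smul]) le_rfl)) ?_
    rw [add_comm]
    exact hw.trans (quotNorm_le a)

end IsUltraSeminorm

end LineQuotient

section Diagonal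

variable {k : Type*} [NormedField k] {n : Type*} [Fintype n] [DecidableEq n]

def IsDiagonal (x : (n → k) → ℝ≥0) : Prop :=
  ∀ c : n → k, x c = univ.sup fun i => ‖c i‖₊ * x (Pi.single i 1)

namespace IsDiagonal

variable {x y : (n → k) → ℝ≥0}

theorem nnnorm_mul_le (hx : IsDiagonal x) (c : n → k) (i : n) :
    ‖c i‖₊ * x (Pi.single i 1) ≤ x c := by
  rw [hx c]
  exact le_sup (f := fun i => ‖c i‖₊ * x (Pi.single i 1)) (mem_univ i)

theorem ext (hx : IsDiagonal x) (hy : IsDiagonal y)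
    (h : ∀ i, x (Pi.single i 1) = y (Pi.single i 1)) : x = y :=
  funext fun c => by simp only [hx c, hy c, h]

theorem comp_perm (hx : IsDiagonal x) (σ : Equiv.Perm n) : IsDiagonal fun c => x (c ∘ σ) := by
  intro c
  simp only [Pi.single_comp_equiv]
  rw [hx, ← Finset.map_univ_equiv σ.symm, sup_map]
  simp [Function.comp_def]

end IsDiagonal

end Diagonal

section IntegralMatrices

variable {k : Type*} [NormedField k] {l m n : Type*}

def IsIntegralMatrix (M : Matrix m n k) : Prop :=
  ∀ i j, ‖M i j‖ ≤ 1

theorem IsIntegralMatrix.mul [Fintype n] [IsUltrametricDist k] {M : Matrix l n k}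
    {N : Matrix n m k} (hM : IsIntegralMatrix M) (hN : IsIntegralMatrix N) :
    IsIntegralMatrix (M * N) :=
  fun i j => IsUltrametricDist.norm_sum_le_of_forall_le_of_nonneg zero_le_one fun a _ => by
    rw [norm_mul]
    exact mul_le_one₀ (hM i a) (norm_nonneg _) (hN a j)

theorem IsIntegralMatrix.norm_det_le_one [Fintype n] [DecidableEq n] [IsUltrametricDist k]
    {M : Matrix n n k} (hM : IsIntegralMatrix M) : ‖M.det‖ ≤ 1 := by
  rw [det_apply']
  refine IsUltrametricDist.norm_sum_le_of_forall_le_of_nonneg zero_le_one fun σ _ => ?_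
  rw [norm_mul, norm_prod]
  exact mul_le_one₀ (IsUltrametricDist.norm_intCast_le_one k _) (by positivity)
    (prod_le_one (fun _ _ => norm_nonneg _) fun i _ => hM _ _)

theorem isIntegralMatrix_one [DecidableEq n] : IsIntegralMatrix (1 : Matrix n n k) :=
  fun i j => by rw [one_apply]; split_ifs <;> simp

theorem isIntegralMatrix_permMatrix [DecidableEq n] (σ : Equiv.Perm n) :
    IsIntegralMatrix (σ.permMatrix k) :=
  fun i j => by rw [Equiv.Perm.permMatrix, PEquiv.toMatrix_apply]; split_ifs <;> simp

variable [Fintype n] [DecidableEq n]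

variable (k n) in
/-- The group `K(o) = GL(n, k°)`. -/
def integralGL [IsUltrametricDist k] : Subgroup (GL n k) where
  carrier := {g | IsIntegralMatrix (g : Matrix n n k) ∧ IsIntegralMatrix (↑g⁻¹ : Matrix n n k)}
  mul_mem' ha hb :=
    ⟨ha.1.mul hb.1, by rw [_root_.mul_inv_rev, Units.val_mul]; exact hb.2.mul ha.2⟩
  one_mem' := ⟨isIntegralMatrix_one, by rw [inv_one]; exact isIntegralMatrix_one⟩
  inv_mem' ha := ⟨ha.2, by rw [inv_inv]; exact ha.1⟩

variable [IsUltrametricDist k]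

theorem mem_integralGL_iff {g : GL n k} :
    g ∈ integralGL k n ↔
      IsIntegralMatrix (g : Matrix n n k) ∧ ‖(g : Matrix n n k).det‖ = 1 := by
  refine ⟨fun hg => ⟨hg.1, le_antisymm hg.1.norm_det_le_one ?_⟩, fun ⟨hg, hdet⟩ => ⟨hg, ?_⟩⟩
  · have h := congrArg norm (congrArg det (Units.mul_inv g))
    rw [det_mul, det_one, norm_mul, norm_one] at h
    nlinarith [hg.2.norm_det_le_one, norm_nonneg (g : Matrix n n k).det,
      norm_nonneg (↑g⁻¹ : Matrix n n k).det]
  · intro i j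
    rw [coe_units_inv, Matrix.inv_def, Matrix.smul_apply, adjugate_apply, smul_eq_mul, norm_mul,
      Ring.inverse_eq_inv', norm_inv, hdet, inv_one, one_mul]
    refine IsIntegralMatrix.norm_det_le_one fun a b => ?_
    rw [updateRow_apply]
    split_ifs
    · rw [Pi.single_apply]; split_ifs <;> simp
    · exact hg a b

theorem exists_mem_integralGL_coe_eq {M : Matrix n n k} (hM : IsIntegralMatrix M)
    (hdet : ‖M.det‖ = 1) : ∃ g ∈ integralGL k n, (g : Matrix n n k) = M := by
  have hdet' : M.det ≠ 0 := norm_ne_zero_iff.mp (by rw [hdet]; exact one_ne_zero)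
  exact ⟨GeneralLinearGroup.mkOfDetNeZero M hdet', mem_integralGL_iff.mpr ⟨hM, hdet⟩, rfl⟩

theorem exists_mem_integralGL_coe_eq_permMatrix (σ : Equiv.Perm n) :
    ∃ g ∈ integralGL k n, (g : Matrix n n k) = σ.permMatrix k := by
  refine exists_mem_integralGL_coe_eq (isIntegralMatrix_permMatrix σ) ?_
  rcases Int.units_eq_one_or (Equiv.Perm.sign σ) with h | h <;> simp [h]

theorem exists_perm_nnnorm_eq_one {g : GL n k} (hg : g ∈ integralGL k n) :
    ∃ σ : Equiv.Perm n, ∀ i, ‖(g : Matrix n n k) (σ i) i‖₊ = 1 := by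
  obtain ⟨hint, hdet⟩ := mem_integralGL_iff.mp hg
  rw [det_apply'] at hdet
  -- an ultrametric sum is dominated by one of its terms
  obtain ⟨σ, -, hσ⟩ := IsUltrametricDist.exists_norm_finsetSum_le univ
    fun σ : Equiv.Perm n => ((Equiv.Perm.sign σ : ℤ) : k) * ∏ i, (g : Matrix n n k) (σ i) i
  refine ⟨σ, fun i => (prod_eq_one_iff_of_le_one' (f := fun j => ‖(g : Matrix n n k) (σ j) j‖₊)
    fun j _ => ?_).mp (le_antisymm ?_ ?_) i (mem_univ i)⟩
  · exact_mod_cast hint _ _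
  · exact prod_le_one' fun i _ => by exact_mod_cast hint _ _
  · rw [hdet, norm_mul, norm_prod] at hσ
    have := hσ.trans (mul_le_of_le_one_left (by positivity)
      (IsUltrametricDist.norm_intCast_le_one k _))
    rw [← NNReal.coe_le_coe, NNReal.coe_prod]
    simpa using this

end IntegralMatrices

section Bordered

variable {k : Type*} {m : ℕ}

/-- The bordered matrix `[[1, t], [0, B]]`. -/
def borderedMatrix [Zero k] [One k] (t : Fin m → k) (B : Matrix (Fin m) (Fin m) k) :
    Matrix (Fin (m + 1)) (Fin (m + 1)) k :=
  Matrix.of (vecCons (vecCons 1 t) fun i => vecCons 0 (B i))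

section CommRing

variable [CommRing k] (t : Fin m → k) (B : Matrix (Fin m) (Fin m) k)

theorem borderedMatrix_mulVec (a : k) (c : Fin m → k) :
    borderedMatrix t B *ᵥ vecCons a c = vecCons (a + t ⬝ᵥ c) (B *ᵥ c) := by
  ext i
  refine Fin.cases ?_ (fun i => ?_) i <;>
    simp [borderedMatrix, mulVec, dotProduct, Fin.sum_univ_succ]

theorem borderedMatrix_mulVec_single_zero :
    borderedMatrix t B *ᵥ Pi.single 0 1 = Pi.single 0 1 := by
  ext i
  refine Fin.cases ?_ (fun i => ?_) i <;> simp [borderedMatrix]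

theorem borderedMatrix_mulVec_single_succ (j : Fin m) :
    borderedMatrix t B *ᵥ Pi.single j.succ 1 = vecCons (t j) (B *ᵥ Pi.single j 1) := by
  ext i
  refine Fin.cases ?_ (fun i => ?_) i <;> simp [borderedMatrix]

theorem det_borderedMatrix : (borderedMatrix t B).det = B.det := by
  have hminor : (borderedMatrix t B).submatrix Fin.succ Fin.succ = B := rfl
  rw [det_succ_column_zero, Fin.sum_univ_succ, Fin.succAbove_zero, hminor]
  simp [borderedMatrix]

end CommRing

theorem IsIntegralMatrix.borderedMatrix [NormedField k] {t : Fin m → k}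
    {B : Matrix (Fin m) (Fin m) k} (ht : ∀ j, ‖t j‖ ≤ 1) (hB : IsIntegralMatrix B) :
    IsIntegralMatrix (borderedMatrix t B) := by
  have hB' : ∀ i j, ‖B i j‖ ≤ 1 := hB
  intro i j
  refine Fin.cases ?_ (fun i => ?_) i <;> refine Fin.cases ?_ (fun j => ?_) j <;>
    simp [_root_.borderedMatrix, ht, hB']

end Bordered

section Existence

variable {k : Type*} [NormedField k] {m : ℕ}

theorem vecCons_add_smul_single (a t : k) (c : Fin m → k) :
    vecCons a c + t • Pi.single 0 1 = vecCons (a + t) c := by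
  ext i
  refine Fin.cases ?_ (fun i => ?_) i <;> simp

/-- The seminorm induced by `x` on `k^m ≅ k^{m+1} ⧸ k e₀`. -/
noncomputable def quotHead (x : (Fin (m + 1) → k) → ℝ≥0) (c : Fin m → k) : ℝ≥0 :=
  quotNorm k x (Pi.single 0 1) (vecCons 0 c)

theorem quotHead_le {x : (Fin (m + 1) → k) → ℝ≥0} (t : k) (c : Fin m → k) :
    quotHead x c ≤ x (vecCons t c) := by
  have := quotNorm_le (x := x) (e := Pi.single 0 1) (v := vecCons 0 c) t
  rwa [vecCons_add_smul_single, zero_add] at this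

theorem IsUltraSeminorm.quotHead {x : (Fin (m + 1) → k) → ℝ≥0} (hx : IsUltraSeminorm k x) :
    IsUltraSeminorm k (quotHead x) :=
  (hx.quotient _).comp_linearMap (LinearMap.vecCons 0 LinearMap.id)

theorem Fin.sup_univ_succ {α : Type*} [SemilatticeSup α] [OrderBot α]
    (f : Fin (m + 1) → α) : univ.sup f = f 0 ⊔ univ.sup fun j : Fin m => f j.succ := by
  rw [Fin.univ_succ, sup_cons, sup_map]
  rfl

theorem isDiagonal_borderedMatrix {x : (Fin (m + 1) → k) → ℝ≥0}
    (hx : IsUltraSeminorm k x) {t : Fin m → k} {B : Matrix (Fin m) (Fin m) k}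
    (hB : IsDiagonal (quotHead x ∘ B.mulVec))
    (ht : ∀ j, x (vecCons (t j) (B *ᵥ Pi.single j 1)) ≤ quotHead x (B *ᵥ Pi.single j 1)) :
    IsDiagonal (x ∘ (borderedMatrix t B).mulVec) := by
  intro c
  obtain ⟨a, c, rfl⟩ : ∃ a c', c = vecCons a c' := ⟨c 0, Fin.tail c, (Fin.cons_self_tail c).symm⟩
  set w : Fin (m + 1) → k := vecCons (t ⬝ᵥ c) (B *ᵥ c)
  have hsum : w = ∑ j, c j • vecCons (t j) (B *ᵥ Pi.single j 1) := by
    ext i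
    refine Fin.cases ?_ (fun i => ?_) i <;> simp [w, dotProduct, mulVec, mul_comm]
  have hle : x w ≤ univ.sup fun j => ‖c j‖₊ * x (vecCons (t j) (B *ᵥ Pi.single j 1)) := by
    rw [hsum]
    exact (hx.map_sum_le _ _).trans (sup_mono_fun fun j _ => (hx.map_smul _ _).le)
  have hsup : (univ.sup fun j => ‖c j‖₊ * x (vecCons (t j) (B *ᵥ Pi.single j 1))) ≤
      quotHead x (B *ᵥ c) :=
    (sup_mono_fun fun j _ => mul_le_mul_of_nonneg_left (ht j) zero_le).trans_eq (hB c).symm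
  -- `w` realises the quotient seminorm, so it is orthogonal to `e₀`
  have hmin : x w ≤ quotNorm k x (Pi.single 0 1) w := le_ciInf fun s => by
    rw [vecCons_add_smul_single]
    exact (hle.trans hsup).trans (quotHead_le _ _)
  have hsplit : vecCons (a + t ⬝ᵥ c) (B *ᵥ c) = a • Pi.single 0 1 + w := by
    rw [add_comm _ w, vecCons_add_smul_single, add_comm]
  simp only [Function.comp_apply, borderedMatrix_mulVec, hsplit, hx.map_smul_add_eq_max hmin,
    Fin.sup_univ_succ, cons_val_zero, cons_val_succ, borderedMatrix_mulVec_single_zero,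
    borderedMatrix_mulVec_single_succ]
  rw [le_antisymm hle (hsup.trans (quotHead_le _ _))]

variable [IsUltrametricDist k] [CompleteSpace k] {q : ℝ≥0}

theorem exists_mem_integralGL_isDiagonal_succ (hq : 1 < q)
    (hgap : ∀ a b : k, ‖b‖₊ < ‖a‖₊ → q * ‖b‖₊ ≤ ‖a‖₊) {x : (Fin (m + 1) → k) → ℝ≥0}
    (hx : IsUltraSeminorm k x) (hmax : ∀ i, x (Pi.single i 1) ≤ x (Pi.single 0 1))
    {gb : GL (Fin m) k} (hgb : gb ∈ integralGL k (Fin m))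
    (hdiag : IsDiagonal (quotHead x ∘ (gb : Matrix (Fin m) (Fin m) k).mulVec)) :
    ∃ g ∈ integralGL k (Fin (m + 1)),
      IsDiagonal (x ∘ (g : Matrix (Fin (m + 1)) (Fin (m + 1)) k).mulVec) := by
  set B : Matrix (Fin m) (Fin m) k := ↑gb
  obtain ⟨hBint, hBdet⟩ := mem_integralGL_iff.mp hgb
  have hlift : ∀ j, ∃ t : k, ‖t‖ ≤ 1 ∧
      x (vecCons t (B *ᵥ Pi.single j 1)) = quotHead x (B *ᵥ Pi.single j 1) := by
    intro j
    have hv : x (vecCons 0 (B *ᵥ Pi.single j 1)) ≤ x (Pi.single 0 1) := by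
      refine (hx.map_le_sup_single _).trans (Finset.sup_le fun i _ => ?_)
      refine (mul_le_of_le_one_left zero_le ?_).trans (hmax i)
      refine Fin.cases (by simp) (fun i => ?_) i
      simpa [mulVec_single_one, ← NNReal.coe_le_coe] using hBint i j
    obtain ⟨t, ht, hmin⟩ := hx.exists_norm_le_one_eq_quotNorm hq hgap hv
    rw [vecCons_add_smul_single, zero_add] at hmin
    exact ⟨t, ht, hmin⟩
  choose t ht hmin using hlift
  obtain ⟨g, hg, hgB⟩ := exists_mem_integralGL_coe_eq (hBint.borderedMatrix ht)
    (by rw [det_borderedMatrix, hBdet])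
  exact ⟨g, hg, hgB ▸ isDiagonal_borderedMatrix hx hdiag fun j => (hmin j).le⟩

theorem IsUltraSeminorm.exists_mem_integralGL_isDiagonal (hq : 1 < q)
    (hgap : ∀ a b : k, ‖b‖₊ < ‖a‖₊ → q * ‖b‖₊ ≤ ‖a‖₊) :
    ∀ {n : ℕ} {x : (Fin n → k) → ℝ≥0}, IsUltraSeminorm k x →
      ∃ g ∈ integralGL k (Fin n), IsDiagonal (x ∘ (g : Matrix (Fin n) (Fin n) k).mulVec)
  | 0, x, hx => ⟨1, one_mem _, fun c => by simpa [Subsingleton.elim c 0] using hx.map_zero⟩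
  | m + 1, x, hx => by
    obtain ⟨i₀, -, hi₀⟩ := exists_max_image univ (fun i => x (Pi.single i 1)) univ_nonempty
    obtain ⟨p, hp, hpσ⟩ := exists_mem_integralGL_coe_eq_permMatrix (k := k) (Equiv.swap 0 i₀)
    set x' := x ∘ (p : Matrix (Fin (m + 1)) (Fin (m + 1)) k).mulVec
    have hx' : IsUltraSeminorm k x' :=
      hx.comp_linearMap (p : Matrix (Fin (m + 1)) (Fin (m + 1)) k).mulVecLin
    have hx'single : ∀ i, x' (Pi.single i 1) = x (Pi.single (Equiv.swap 0 i₀ i) 1) := by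
      intro i
      simp only [x', Function.comp_apply, hpσ, permMatrix_mulVec, Pi.single_comp_equiv,
        Equiv.symm_swap]
    have hmax : ∀ i, x' (Pi.single i 1) ≤ x' (Pi.single 0 1) := fun i => by
      rw [hx'single, hx'single, Equiv.swap_apply_left]
      exact hi₀ _ (mem_univ _)
    obtain ⟨gb, hgb, hdiag⟩ := exists_mem_integralGL_isDiagonal hq hgap hx'.quotHead
    obtain ⟨g, hg, hgdiag⟩ := exists_mem_integralGL_isDiagonal_succ hq hgap hx' hmax hgb hdiag
    refine ⟨p * g, mul_mem hp hg, ?_⟩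
    convert hgdiag using 1
    funext v
    simp [x', mulVec_mulVec]

theorem IsUltraSeminorm.exists_mem_integralGL_isDiagonal_antitone (hq : 1 < q)
    (hgap : ∀ a b : k, ‖b‖₊ < ‖a‖₊ → q * ‖b‖₊ ≤ ‖a‖₊) {n : ℕ} {x : (Fin n → k) → ℝ≥0}
    (hx : IsUltraSeminorm k x) :
    ∃ g ∈ integralGL k (Fin n), IsDiagonal (x ∘ (g : Matrix (Fin n) (Fin n) k).mulVec) ∧
      Antitone fun i => x ((g : Matrix (Fin n) (Fin n) k) *ᵥ Pi.single i 1) := by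
  obtain ⟨g, hg, hdiag⟩ := hx.exists_mem_integralGL_isDiagonal hq hgap
  set f := fun i => x ((g : Matrix (Fin n) (Fin n) k) *ᵥ Pi.single i 1)
  set σ := Tuple.sort (OrderDual.toDual ∘ f)
  obtain ⟨p, hp, hpσ⟩ := exists_mem_integralGL_coe_eq_permMatrix (k := k) σ.symm
  have hcomp : ∀ c, (↑(g * p) : Matrix (Fin n) (Fin n) k) *ᵥ c = ↑g *ᵥ (c ∘ σ.symm) := by
    intro c
    rw [Units.val_mul, ← mulVec_mulVec, hpσ, permMatrix_mulVec]
  refine ⟨g * p, mul_mem hg hp, ?_, ?_⟩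
  · simpa only [Function.comp_def, hcomp] using hdiag.comp_perm σ.symm
  · simpa only [hcomp, Pi.single_comp_equiv, Equiv.symm_symm] using
      monotone_toDual_comp_iff.mp (Tuple.monotone_sort (OrderDual.toDual ∘ f))

end Existence

section Uniqueness

theorem le_of_antitone_of_comp_perm_le {α : Type*} [Preorder α] {m : ℕ} {u v : Fin m → α}
    (hu : Antitone u) (hv : Antitone v) (σ : Equiv.Perm (Fin m)) (h : ∀ i, v (σ i) ≤ u i)
    (i : Fin m) : v i ≤ u i := by
  -- pigeonhole: `σ` cannot map `Ici i` into the smaller set `Ioi i`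
  obtain ⟨j, hij, hji⟩ : ∃ j, i ≤ j ∧ σ j ≤ i := by
    by_contra! hc
    have := card_le_card_of_injOn σ (s := Ici i) (t := Ioi i)
      (fun j hj => by simpa using hc j (by simpa using hj)) σ.injective.injOn
    simp only [Fin.card_Ici, Fin.card_Ioi] at this
    omega
  exact (hv hji).trans ((h j).trans (hu hij))

variable {k : Type*} [NormedField k] [IsUltrametricDist k]

theorem IsDiagonal.exists_perm_le {n : Type*} [Fintype n] [DecidableEq n]
    {x : (n → k) → ℝ≥0} (hx : IsDiagonal x) {g : GL n k} (hg : g ∈ integralGL k n) :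
    ∃ σ : Equiv.Perm n, ∀ i, x (Pi.single (σ i) 1) ≤ x ((g : Matrix n n k) *ᵥ Pi.single i 1) := by
  obtain ⟨σ, hσ⟩ := exists_perm_nnnorm_eq_one hg
  refine ⟨σ, fun i => ?_⟩
  simpa [mulVec_single_one, hσ i] using
    hx.nnnorm_mul_le ((g : Matrix n n k) *ᵥ Pi.single i 1) (σ i)

theorem IsDiagonal.comp_mulVec_eq_self {m : ℕ} {x : (Fin m → k) → ℝ≥0} (hx : IsDiagonal x)
    (hxa : Antitone fun i => x (Pi.single i 1)) {g : GL (Fin m) k} (hg : g ∈ integralGL k (Fin m))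
    (hgx : IsDiagonal (x ∘ (g : Matrix (Fin m) (Fin m) k).mulVec))
    (hgxa : Antitone fun i => x ((g : Matrix (Fin m) (Fin m) k) *ᵥ Pi.single i 1)) :
    x ∘ (g : Matrix (Fin m) (Fin m) k).mulVec = x := by
  obtain ⟨σ, hσ⟩ := hx.exists_perm_le hg
  obtain ⟨τ, hτ⟩ := hgx.exists_perm_le (inv_mem hg)
  have hτ' : ∀ i, x (↑g *ᵥ Pi.single (τ i) 1) ≤ x (Pi.single i 1) := fun i => by
    simpa only [Function.comp_apply, mulVec_mulVec, ← Units.val_mul, mul_inv_cancel,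
      Units.val_one, one_mulVec] using hτ i
  exact hgx.ext hx fun i => le_antisymm (le_of_antitone_of_comp_perm_le hxa hgxa τ hτ' i)
    (le_of_antitone_of_comp_perm_le hgxa hxa σ hσ i)

end Uniqueness

theorem mul_nnnorm_le_of_nnnorm_lt {k : Type*} [NormedField k] {q : ℝ} (hq : 1 < q)
    (hdisc : ∀ a : k, a ≠ 0 → ∃ m : ℤ, ‖a‖ = q ^ m) {a b : k} (h : ‖b‖₊ < ‖a‖₊) :
    q.toNNReal * ‖b‖₊ ≤ ‖a‖₊ := by
  rcases eq_or_ne b 0 with rfl | hb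
  · simp
  have hb' : 0 < ‖b‖ := norm_pos_iff.mpr hb
  obtain ⟨m, hm⟩ := hdisc (a / b) (div_ne_zero (by rintro rfl; simp at h) hb)
  have hm1 : 0 < m := by
    rw [← one_lt_zpow_iff_right₀ hq, ← hm, norm_div, one_lt_div hb']
    exact_mod_cast h
  have hqab : q ≤ ‖a‖ / ‖b‖ := by
    rw [← norm_div, hm]
    simpa using zpow_le_zpow_right₀ hq.le hm1
  rw [← NNReal.coe_le_coe, NNReal.coe_mul, Real.coe_toNNReal _ (by linarith), coe_nnnorm,
    coe_nnnorm]
  exact (le_div_iff₀ hb').mp hqab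

/-- `C̄` is a fundamental domain for the `K(o)`-action on non-zero seminorms on
`V = k^{d+1}`: every `K(o)`-orbit meets `C̄`, and if `x ∈ C̄`, `g ∈ K(o)` and `g·x ∈ C̄`, then
`g·x = x`. -/
theorem Cbar_fundamental_domain
    {k : Type*} [NontriviallyNormedField k] [CompleteSpace k]
    (hna : ∀ a b : k, ‖a + b‖ ≤ max ‖a‖ ‖b‖)
    (hdisc : ∃ q : ℝ, 1 < q ∧ ∀ a : k, a ≠ 0 → ∃ m : ℤ, ‖a‖ = q ^ m)
    (d : ℕ) :
    (∀ y : (Fin (d + 1) → k) → NNReal, IsVecSeminorm d y → (∃ v, y v ≠ 0) →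
      ∃ g : Matrix.GeneralLinearGroup (Fin (d + 1)) k,
        InKo d g ∧ InCbar d (glAct d g y)) ∧
    (∀ (x : (Fin (d + 1) → k) → NNReal)
        (g : Matrix.GeneralLinearGroup (Fin (d + 1)) k),
      IsVecSeminorm d x → InCbar d x → InKo d g → InCbar d (glAct d g x) →
        glAct d g x = x) := by
  have : IsUltrametricDist k :=
    IsUltrametricDist.isUltrametricDist_of_forall_norm_add_le_max_norm hna
  obtain ⟨q, hq, hqdisc⟩ := hdisc
  have hq' : 1 < q.toNNReal := by simpa using hq
  refine ⟨fun y hy ⟨v, hv⟩ => ?_, fun x g _ hx hg hgx => ?_⟩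
  · obtain ⟨g, hg, hdiag, hanti⟩ := IsUltraSeminorm.exists_mem_integralGL_isDiagonal_antitone
      (x := y) hq' (fun _ _ => mul_nnnorm_le_of_nnnorm_lt hq hqdisc) ⟨hy.1, hy.2⟩
    have hact : glAct d g⁻¹ y = y ∘ (g : Matrix (Fin (d + 1)) (Fin (d + 1)) k).mulVec := by
      funext w; simp [glAct]
    refine ⟨g⁻¹, inv_mem hg, ?_, hact ▸ hdiag, fun i j hij => hact ▸ hanti hij⟩
    refine ⟨(↑g⁻¹ : Matrix (Fin (d + 1)) (Fin (d + 1)) k) *ᵥ v, ?_⟩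
    simpa [hact, mulVec_mulVec] using hv
  · exact IsDiagonal.comp_mulVec_eq_self hx.2.1 (fun i j hij => hx.2.2 i j hij) (inv_mem hg)
      hgx.2.1 fun i j hij => hgx.2.2 i j hij
end
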